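/- arXiv:2605.27565 — 2 statements merged into one kernel-verified Lean document; each statement's English description precedes it below -/
import Mathlib

section
/- Let k ≥ 1, let a_1, …, a_k be natural numbers, and let s_1, …, s_k be pairwise disjoint finite sets (over an arbitrary type) with |s_t| = ∑_{i=t}^{k} a_i for every t, whose union is a set P. For each t choose a subset b_t ⊆ s_t with |b_t| = a_t. Define s'_1 = b_1 ∪ b_2 ∪ ⋯ ∪ b_k and s'_{t+1} = s_t \\ b_t for 1 ≤ t ≤ k−1. Then: (i) b_k = s_k, i.e., the oldest reuse-distance set is completely consumed; (ii) the sets s'_1, …, s'_k are pairwise disjoint, their union is again P, and |s'_t| = ∑_{i=t}^{k} a_i for every t. In particular, the size profile of the partition into reuse-distance sets is invariant under the batch operation, and each batch has total size B = ∑_{i=1}^k a_i. -/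
/-- One batch step of Cloak preserves the partition structure:
given pairwise disjoint reuse-distance sets `s 1, …, s k` with
`|s t| = ∑_{i=t}^k a i` and union `P`, and chosen batch subsets `b t ⊆ s t` with
`|b t| = a t`, the new sets `s' 1 = b 1 ∪ ⋯ ∪ b k` and `s' (t+1) = s t \ b t`
(for `1 ≤ t ≤ k-1`) satisfy: (i) `b k = s k`; (ii) the `s' t` are pairwise
disjoint, their union is again `P`, and `|s' t| = ∑_{i=t}^k a i` for every `t`;
moreover the batch has total size `B = ∑_{i=1}^k a i`. -/
theorem batch_step_preserves_partition {α : Type*} [DecidableEq α]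
    (k : ℕ) (hk : 1 ≤ k) (a : ℕ → ℕ)
    (s : ℕ → Finset α) (P : Finset α)
    (hdisj : ∀ t ∈ Finset.Icc 1 k, ∀ t' ∈ Finset.Icc 1 k, t ≠ t' →
      Disjoint (s t) (s t'))
    (hcard : ∀ t ∈ Finset.Icc 1 k, (s t).card = ∑ i ∈ Finset.Icc t k, a i)
    (hunion : (Finset.Icc 1 k).biUnion s = P)
    (b : ℕ → Finset α)
    (hb : ∀ t ∈ Finset.Icc 1 k, b t ⊆ s t)
    (hbcard : ∀ t ∈ Finset.Icc 1 k, (b t).card = a t)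
    (s' : ℕ → Finset α)
    (hs'1 : s' 1 = (Finset.Icc 1 k).biUnion b)
    (hs'succ : ∀ t, 1 ≤ t → t ≤ k - 1 → s' (t + 1) = s t \ b t) :
    b k = s k ∧
    (∀ t ∈ Finset.Icc 1 k, ∀ t' ∈ Finset.Icc 1 k, t ≠ t' →
      Disjoint (s' t) (s' t')) ∧
    (Finset.Icc 1 k).biUnion s' = P ∧
    (∀ t ∈ Finset.Icc 1 k, (s' t).card = ∑ i ∈ Finset.Icc t k, a i) ∧
    ((Finset.Icc 1 k).biUnion b).card = ∑ i ∈ Finset.Icc 1 k, a i := by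
  have hkk : k ∈ Finset.Icc 1 k := by simp [hk]
  have hbk : b k = s k := by
    apply Finset.eq_of_subset_of_card_le (hb k hkk)
    rw [hcard k hkk, hbcard k hkk]
    simp
  have hbdisj : ∀ t ∈ Finset.Icc 1 k, ∀ t' ∈ Finset.Icc 1 k, t ≠ t' →
      Disjoint (b t) (b t') := fun t ht t' ht' hne =>
    (hdisj t ht t' ht' hne).mono (hb t ht) (hb t' ht')
  have hcardb : ((Finset.Icc 1 k).biUnion b).card = ∑ i ∈ Finset.Icc 1 k, a i := by
    rw [Finset.card_biUnion hbdisj]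
    exact Finset.sum_congr rfl hbcard
  have hs' : ∀ t, 2 ≤ t → t ≤ k → s' t = s (t - 1) \ b (t - 1) := by
    intro t h2 hkt
    have h := hs'succ (t - 1) (by omega) (by omega)
    rwa [Nat.sub_add_cancel (by omega)] at h
  have hdisj1 : ∀ t, 2 ≤ t → t ≤ k → Disjoint (s' 1) (s' t) := by
    intro t h2 hkt
    rw [hs'1, hs' t h2 hkt, Finset.disjoint_left]
    intro x hx hx'
    simp only [Finset.mem_biUnion] at hx
    obtain ⟨j, hj, hxj⟩ := hx
    rw [Finset.mem_sdiff] at hx'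
    by_cases hjt : j = t - 1
    · exact hx'.2 (hjt ▸ hxj)
    · exact Finset.disjoint_left.mp
        (hdisj j hj (t - 1) (by simp only [Finset.mem_Icc]; omega) hjt)
        (hb j hj hxj) hx'.1
  have hdisj' : ∀ t ∈ Finset.Icc 1 k, ∀ t' ∈ Finset.Icc 1 k, t ≠ t' →
      Disjoint (s' t) (s' t') := by
    have key : ∀ t ∈ Finset.Icc 1 k, ∀ t' ∈ Finset.Icc 1 k, t < t' →
        Disjoint (s' t) (s' t') := by
      intro t ht t' ht' hlt
      simp only [Finset.mem_Icc] at ht ht'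
      rcases Nat.eq_or_lt_of_le ht.1 with h1 | h1
      · exact h1 ▸ hdisj1 t' (by omega) ht'.2
      · have := hs' t (by omega) ht.2
        have := hs' t' (by omega) ht'.2
        rw [hs' t (by omega) ht.2, hs' t' (by omega) ht'.2]
        exact ((hdisj (t - 1) (by simp only [Finset.mem_Icc]; omega)
          (t' - 1) (by simp only [Finset.mem_Icc]; omega) (by omega)).mono
          Finset.sdiff_subset Finset.sdiff_subset)
    intro t ht t' ht' hne
    rcases Nat.lt_or_ge t t' with h | h
    · exact key t ht t' ht' h
    · exact (key t' ht' t ht (by omega)).symm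
  have hunion' : (Finset.Icc 1 k).biUnion s' = P := by
    rw [← hunion]
    ext x
    simp only [Finset.mem_biUnion]
    constructor
    · rintro ⟨t, ht, hx⟩
      simp only [Finset.mem_Icc] at ht
      rcases Nat.eq_or_lt_of_le ht.1 with h1 | h1
      · rw [← h1, hs'1] at hx
        simp only [Finset.mem_biUnion] at hx
        obtain ⟨j, hj, hxj⟩ := hx
        exact ⟨j, hj, hb j hj hxj⟩
      · rw [hs' t (by omega) ht.2, Finset.mem_sdiff] at hx
        exact ⟨t - 1, by simp only [Finset.mem_Icc]; omega, hx.1⟩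
    · rintro ⟨t, ht, hx⟩
      by_cases hxb : x ∈ b t
      · exact ⟨1, by simp [hk], by
          rw [hs'1]; exact Finset.mem_biUnion.mpr ⟨t, ht, hxb⟩⟩
      · simp only [Finset.mem_Icc] at ht
        rcases Nat.eq_or_lt_of_le ht.2 with h2 | h2
        · subst h2
          rw [← hbk] at hx
          exact absurd hx hxb
        · refine ⟨t + 1, by simp only [Finset.mem_Icc]; omega, ?_⟩
          rw [hs'succ t ht.1 (by omega), Finset.mem_sdiff]
          exact ⟨hx, hxb⟩
  have hcard' : ∀ t ∈ Finset.Icc 1 k, (s' t).card = ∑ i ∈ Finset.Icc t k, a i := by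
    intro t ht
    simp only [Finset.mem_Icc] at ht
    rcases Nat.eq_or_lt_of_le ht.1 with h1 | h1
    · rw [← h1, hs'1, hcardb]
    · have ht1 : t - 1 ∈ Finset.Icc 1 k := by simp only [Finset.mem_Icc]; omega
      rw [hs' t (by omega) ht.2, Finset.card_sdiff_of_subset (hb (t - 1) ht1),
        hcard (t - 1) ht1, hbcard (t - 1) ht1]
      have hins : Finset.Icc (t - 1) k = insert (t - 1) (Finset.Icc t k) := by
        ext x; simp only [Finset.mem_Icc, Finset.mem_insert]; omega
      rw [hins, Finset.sum_insert (by simp only [Finset.mem_Icc]; omega)]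
      omega
  exact ⟨hbk, hdisj', hunion', hcard', hcardb⟩
end

section
/- Let k ≥ 1 and let a_1, …, a_k be positive integers. Consider a sequence of batch steps j = 0, 1, 2, …: at each step j there are pairwise disjoint finite sets s^{(j)}_1, …, s^{(j)}_k with union a fixed ground set P and |s^{(j)}_t| = ∑_{i=t}^{k} a_i, together with chosen subsets b^{(j)}_t ⊆ s^{(j)}_t with |b^{(j)}_t| = a_t, satisfying the update rule s^{(j+1)}_1 = b^{(j)}_1 ∪ ⋯ ∪ b^{(j)}_k and s^{(j+1)}_{t+1} = s^{(j)}_t \\ b^{(j)}_t for 1 ≤ t ≤ k−1. Then every element p ∈ P is selected into some batch within the first k steps: there exists j with 0 ≤ j ≤ k−1 such that p ∈ b^{(j)}_1 ∪ ⋯ ∪ b^{(j)}_k. -/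
/-- In a sequence of Cloak batch steps `j = 0, 1, 2, …`, where at
each step `j` the pairwise disjoint reuse-distance sets `s j 1, …, s j k` with
`|s j t| = ∑_{i=t}^k a i` partition the fixed ground set `P`, the chosen batch
subsets satisfy `b j t ⊆ s j t` with `|b j t| = a t ≥ 1`, and the update rule
`s (j+1) 1 = b j 1 ∪ ⋯ ∪ b j k`, `s (j+1) (t+1) = s j t \ b j t` (for
`1 ≤ t ≤ k-1`) holds, every element `p ∈ P` is selected into some batch within
the first `k` steps: there is `j ≤ k - 1` with `p ∈ b j 1 ∪ ⋯ ∪ b j k`. -/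
theorem every_element_selected_within_k_batches {α : Type*} [DecidableEq α]
    (k : ℕ) (hk : 1 ≤ k) (a : ℕ → ℕ)
    (ha : ∀ t ∈ Finset.Icc 1 k, 1 ≤ a t)
    (P : Finset α)
    (s : ℕ → ℕ → Finset α) (b : ℕ → ℕ → Finset α)
    (hdisj : ∀ j, ∀ t ∈ Finset.Icc 1 k, ∀ t' ∈ Finset.Icc 1 k, t ≠ t' →
      Disjoint (s j t) (s j t'))
    (hunion : ∀ j, (Finset.Icc 1 k).biUnion (s j) = P)
    (hcard : ∀ j, ∀ t ∈ Finset.Icc 1 k, (s j t).card = ∑ i ∈ Finset.Icc t k, a i)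
    (hb : ∀ j, ∀ t ∈ Finset.Icc 1 k, b j t ⊆ s j t)
    (hbcard : ∀ j, ∀ t ∈ Finset.Icc 1 k, (b j t).card = a t)
    (hupd1 : ∀ j, s (j + 1) 1 = (Finset.Icc 1 k).biUnion (b j))
    (hupdsucc : ∀ j, ∀ t, 1 ≤ t → t ≤ k - 1 → s (j + 1) (t + 1) = s j t \ b j t) :
    ∀ p ∈ P, ∃ j, j ≤ k - 1 ∧ p ∈ (Finset.Icc 1 k).biUnion (b j) := by
  -- b j k = s j k, since they have equal cards
  have hbk : ∀ j, b j k = s j k := by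
    intro j
    have hkmem : k ∈ Finset.Icc 1 k := by simp [hk]
    apply Finset.eq_of_subset_of_card_le (hb j k hkmem)
    rw [hbcard j k hkmem, hcard j k hkmem, Finset.Icc_self, Finset.sum_singleton]
  intro p hp
  -- main claim by induction on n ≥ k - t
  have main : ∀ n : ℕ, ∀ j t : ℕ, t ∈ Finset.Icc 1 k → k - t ≤ n → p ∈ s j t →
      ∃ j', j' ≤ j + (k - t) ∧ p ∈ (Finset.Icc 1 k).biUnion (b j') := by
    intro n
    induction n with
    | zero =>
      intro j t ht hle hps
      have htk : t = k := by
        have := Finset.mem_Icc.mp ht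
        omega
      refine ⟨j, by omega, Finset.mem_biUnion.mpr ⟨t, ht, ?_⟩⟩
      rw [htk, hbk]
      exact htk ▸ hps
    | succ n ih =>
      intro j t ht hle hps
      by_cases hpb : p ∈ b j t
      · exact ⟨j, by omega, Finset.mem_biUnion.mpr ⟨t, ht, hpb⟩⟩
      · have htIcc := Finset.mem_Icc.mp ht
        have htk : t < k := by
          rcases lt_or_eq_of_le htIcc.2 with h | h
          · exact h
          · exact absurd ((hbk j) ▸ (h ▸ hps)) (h ▸ hpb)
        have hnext : p ∈ s (j + 1) (t + 1) := by
          rw [hupdsucc j t htIcc.1 (by omega)]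
          exact Finset.mem_sdiff.mpr ⟨hps, hpb⟩
        obtain ⟨j', hj', hpj'⟩ := ih (j + 1) (t + 1) (Finset.mem_Icc.mpr ⟨by omega, by omega⟩)
          (by omega) hnext
        exact ⟨j', by omega, hpj'⟩
  -- p is in some s 0 t
  have : p ∈ (Finset.Icc 1 k).biUnion (s 0) := (hunion 0) ▸ hp
  obtain ⟨t, ht, hps⟩ := Finset.mem_biUnion.mp this
  obtain ⟨j, hj, hpj⟩ := main (k - t) 0 t ht le_rfl hps
  have htIcc := Finset.mem_Icc.mp ht
  exact ⟨j, by omega, hpj⟩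
end
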